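/- arXiv:1404.6557 — 5 statements merged into one kernel-verified Lean document; each statement's English description precedes it below -/
import Mathlib

section
/- Let C be a category, let F : C → Ab be a functor to the category of abelian groups, let X be an object of C, and let α ∈ F(X) be weakly flexible with respect to F. Then for every finite homogeneous functorial semi-norm |·| on F one has |α| = 0. -/
open CategoryTheory

universe u v

/-- A finite functorial semi-norm on a functor `F : C ⥤ Ab`: a real-valued
(hence finite) semi-norm on each `F(X)` such that induced maps are
norm-non-increasing. -/
structure FunctorialSeminorm {C : Type u} [Category.{v} C] (F : C ⥤ AddCommGrpCat.{v}) where
  ν : ∀ X : C, F.obj X → ℝ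
  nonneg : ∀ (X : C) (x : F.obj X), 0 ≤ ν X x
  map_zero : ∀ X : C, ν X 0 = 0
  map_neg : ∀ (X : C) (x : F.obj X), ν X (-x) = ν X x
  add_le : ∀ (X : C) (x y : F.obj X), ν X (x + y) ≤ ν X x + ν X y
  functorial : ∀ {X Y : C} (f : X ⟶ Y) (x : F.obj X), ν Y (F.map f x) ≤ ν X x

/-- Homogeneity of a functorial semi-norm. -/
def FunctorialSeminorm.Homogeneous {C : Type u} [Category.{v} C] {F : C ⥤ AddCommGrpCat.{v}}
    (N : FunctorialSeminorm F) : Prop :=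
  ∀ (X : C) (n : ℤ), n ≠ 0 → ∀ x : F.obj X, N.ν X (n • x) = |(n : ℝ)| * N.ν X x

theorem eq_zero_of_infinite_abs_mul_le {S : Set ℤ} (hS : S.Infinite) {c M : ℝ} (hc : 0 ≤ c)
    (hbound : ∀ d ∈ S, |(d : ℝ)| * c ≤ M) : c = 0 := by
  by_contra hne
  have hpos : 0 < c := hc.lt_of_ne' hne
  set n : ℤ := ⌈M / c⌉
  refine hS ((Set.finite_Icc (-n) n).subset fun d hd => ?_)
  have hle : |(d : ℝ)| ≤ n :=
    ((le_div_iff₀ hpos).2 (hbound d hd)).trans (Int.le_ceil _)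
  exact abs_le.1 (by exact_mod_cast hle)

namespace FunctorialSeminorm

variable {C : Type u} [Category.{v} C] {F : C ⥤ AddCommGrpCat.{v}}

theorem abs_mul_le_of_map_eq_zsmul (N : FunctorialSeminorm F) (hN : N.Homogeneous)
    {X Y : C} (f : Y ⟶ X) {α : F.obj X} {β : F.obj Y} {d : ℤ} (h : F.map f β = d • α) :
    |(d : ℝ)| * N.ν X α ≤ N.ν Y β := by
  rcases eq_or_ne d 0 with rfl | hd
  · simpa using N.nonneg Y β
  · calc |(d : ℝ)| * N.ν X α = N.ν X (d • α) := (hN X d hd α).symm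
      _ = N.ν X (F.map f β) := by rw [h]
      _ ≤ N.ν Y β := N.functorial f β

end FunctorialSeminorm

/-- Weakly flexible classes have trivial semi-norm with respect to any finite
homogeneous functorial semi-norm. -/
theorem seminorm_zero_of_weaklyFlexible {C : Type u} [Category.{v} C]
    (F : C ⥤ AddCommGrpCat.{v}) (X : C) (α : F.obj X)
    (hflex : ∃ (Y : C) (β : F.obj Y),
      {d : ℤ | ∃ f : Y ⟶ X, F.map f β = d • α}.Infinite)
    (N : FunctorialSeminorm F) (hN : N.Homogeneous) :
    N.ν X α = 0 := by
  obtain ⟨Y, β, hinf⟩ := hflex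
  refine eq_zero_of_infinite_abs_mul_le (M := N.ν Y β) hinf (N.nonneg X α) ?_
  rintro d ⟨f, hf⟩
  exact N.abs_mul_le_of_map_eq_zsmul hN f hf
end

section
/- Let C be a category and let F : C → Ab be a covariant functor whose composition with the forgetful functor Ab → Set is representable, i.e., naturally isomorphic to Mor_C(Y, ·) for some object Y of C. Then every finite homogeneous functorial semi-norm on F is trivial: for every object X and every α ∈ F(X) one has |α| = 0. -/
/-!
By the Yoneda lemma every `α ∈ F(X)` is `F(g)(u)` for the universal element `u = η_Y(𝟙 Y)` and
some `g : Y ⟶ X`, so functoriality gives `|α| ≤ |u|`: the semi-norm is bounded on each `F(X)`.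
Homogeneity then gives `n |α| = |n α| ≤ |u|` for every `n`, which forces `|α| = 0`.
-/

open CategoryTheory

universe u v

namespace FunctorialSeminorm

variable {C : Type u} [Category.{v} C] {F : C ⥤ AddCommGrpCat.{v}}

theorem Homogeneous.eq_zero_of_forall_le {N : FunctorialSeminorm F} (hN : N.Homogeneous) {X : C}
    {B : ℝ} (hB : ∀ y : F.obj X, N.ν X y ≤ B) (x : F.obj X) : N.ν X x = 0 := by
  refine le_antisymm (not_lt.mp fun hpos => ?_) (N.nonneg X x)
  obtain ⟨n, hn⟩ := exists_nat_gt (B / N.ν X x)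
  have hscaled : ((n + 1 : ℕ) : ℝ) * N.ν X x ≤ B := by
    have h := hB ((n + 1 : ℕ) • x)
    rwa [← natCast_zsmul, hN X _ (by positivity), Int.cast_natCast, abs_of_nonneg (by positivity)]
      at h
  rw [div_lt_iff₀ hpos] at hn
  push_cast at hscaled
  linarith

theorem le_of_corepresentableBy (N : FunctorialSeminorm F) {Y : C}
    (e : (F ⋙ forget AddCommGrpCat).CorepresentableBy Y) {X : C} (x : F.obj X) : N.ν X x ≤ N.ν Y (e.homEquiv (𝟙 Y)) := by
  obtain ⟨g, rfl⟩ := e.homEquiv.surjective x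
  rw [e.homEquiv_eq]
  exact N.functorial g _

end FunctorialSeminorm

/-- Every finite homogeneous functorial semi-norm on a representable covariant
functor `F : C ⥤ Ab` is trivial. -/
theorem seminorm_trivial_of_representable_covariant {C : Type u} [Category.{v} C]
    (F : C ⥤ AddCommGrpCat.{v}) (Y : C)
    (η : coyoneda.obj (Opposite.op Y) ≅ F ⋙ forget AddCommGrpCat.{v})
    (N : FunctorialSeminorm F) (hN : N.Homogeneous) :
    ∀ (X : C) (α : F.obj X), N.ν X α = 0 := fun _ =>
  hN.eq_zero_of_forall_le (N.le_of_corepresentableBy (Functor.corepresentableByEquiv.symm η))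
end

section
/- Let C be a category and let F : Cᵒᵖ → Ab be a contravariant functor whose composition with the forgetful functor Ab → Set is representable, i.e., naturally isomorphic to Mor_C(·, Y) for some object Y of C. Then every finite homogeneous functorial semi-norm on F is trivial: for every object X and every α ∈ F(X) one has |α| = 0. -/
open CategoryTheory

universe u v

/-- A finite functorial semi-norm on a contravariant functor `F : Cᵒᵖ ⥤ Ab`. -/
structure ContraFunctorialSeminorm {C : Type u} [Category.{v} C]
    (F : Cᵒᵖ ⥤ AddCommGrpCat.{v}) where
  ν : ∀ X : C, F.obj (Opposite.op X) → ℝ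
  nonneg : ∀ (X : C) (x : F.obj (Opposite.op X)), 0 ≤ ν X x
  map_zero : ∀ X : C, ν X 0 = 0
  map_neg : ∀ (X : C) (x : F.obj (Opposite.op X)), ν X (-x) = ν X x
  add_le : ∀ (X : C) (x y : F.obj (Opposite.op X)), ν X (x + y) ≤ ν X x + ν X y
  functorial : ∀ {Y X : C} (f : Y ⟶ X) (x : F.obj (Opposite.op X)),
    ν Y (F.map f.op x) ≤ ν X x

/-- Homogeneity of a functorial semi-norm. -/
def ContraFunctorialSeminorm.Homogeneous {C : Type u} [Category.{v} C]
    {F : Cᵒᵖ ⥤ AddCommGrpCat.{v}} (N : ContraFunctorialSeminorm F) : Prop :=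
  ∀ (X : C) (n : ℤ), n ≠ 0 → ∀ x : F.obj (Opposite.op X),
    N.ν X (n • x) = |(n : ℝ)| * N.ν X x

/-! By Yoneda, every element of a representable functor is a pullback of the universal element
`e ∈ F(Y)`, so functoriality bounds every `|α|` by `|e|`. Homogeneity gives `|n • α| = n |α|`,
which stays bounded only if `|α| = 0`. -/

namespace ContraFunctorialSeminorm

variable {C : Type u} [Category.{v} C] {F : Cᵒᵖ ⥤ AddCommGrpCat.{v}}
  (N : ContraFunctorialSeminorm F)

theorem le_of_representableBy {Y : C} (R : (F ⋙ forget AddCommGrpCat).RepresentableBy Y)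
    {X : C} (α : F.obj (Opposite.op X)) : N.ν X α ≤ N.ν Y (R.homEquiv (𝟙 Y)) := by
  have hα : α = F.map (R.homEquiv.symm α).op (R.homEquiv (𝟙 Y)) := by
    conv_lhs => rw [← R.homEquiv.apply_symm_apply α, R.homEquiv_eq]
    rfl
  rw [hα]
  exact N.functorial _ _

variable {N}

theorem Homogeneous.map_nsmul (hN : N.Homogeneous) {X : C} (n : ℕ)
    (x : F.obj (Opposite.op X)) : N.ν X (n • x) = n * N.ν X x := by
  rcases eq_or_ne n 0 with rfl | hn
  · simp [N.map_zero]
  · have := hN X n (by exact_mod_cast hn) x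
    rwa [natCast_zsmul, Int.cast_natCast, abs_of_nonneg (Nat.cast_nonneg n)] at this

theorem Homogeneous.eq_zero_of_forall_le (hN : N.Homogeneous) {X : C} (M : ℝ)
    (hM : ∀ x : F.obj (Opposite.op X), N.ν X x ≤ M) (x : F.obj (Opposite.op X)) :
    N.ν X x = 0 := by
  refine le_antisymm ?_ (N.nonneg X x)
  by_contra! hpos
  obtain ⟨n, hn⟩ := exists_lt_nsmul hpos M
  have := hM (n • x)
  rw [hN.map_nsmul, ← nsmul_eq_mul] at this
  linarith

end ContraFunctorialSeminorm

/-- Every finite homogeneous functorial semi-norm on a representable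
contravariant functor `F : Cᵒᵖ ⥤ Ab` is trivial. -/
theorem seminorm_trivial_of_representable_contravariant {C : Type u} [Category.{v} C]
    (F : Cᵒᵖ ⥤ AddCommGrpCat.{v}) (Y : C)
    (η : yoneda.obj Y ≅ F ⋙ forget AddCommGrpCat.{v})
    (N : ContraFunctorialSeminorm F) (hN : N.Homogeneous) :
    ∀ (X : C) (α : F.obj (Opposite.op X)), N.ν X α = 0 := by
  let R := Functor.representableByEquiv.symm η
  exact fun X ↦ hN.eq_zero_of_forall_le _ (N.le_of_representableBy R)
end

section
/- Let C be a category such that for every object X the countably infinite coproduct ∐_ℕ X exists in C, and let F : Cᵒᵖ → Ab be a contravariant functor such that for every object X the structure morphisms X → ∐_ℕ X of the summands induce an isomorphism φ_X : F(∐_ℕ X) → ∏_ℕ F(X). Then every finite homogeneous functorial semi-norm on F is trivial: for every object X and every α ∈ F(X) one has |α| = 0. -/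
/-!
Pick `γ ∈ F(∐_ℕ X)` whose `d`-th component is `d • α`, which surjectivity of `φ_X` allows.
Functoriality along the `d`-th summand inclusion and homogeneity give `d * |α| ≤ |γ|` for every
`d`, so the finite number `|γ|` bounds all multiples of `|α|`, forcing `|α| = 0`.
-/

open CategoryTheory CategoryTheory.Limits

universe u v

theorem nonpos_of_forall_nsmul_le {M : Type*} [AddCommMonoid M] [LinearOrder M]
    [IsOrderedCancelAddMonoid M] [Archimedean M] {a b : M} (h : ∀ n : ℕ, n • a ≤ b) :
    a ≤ 0 := by
  by_contra! ha
  obtain ⟨n, hn⟩ := exists_lt_nsmul ha b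
  exact (h n).not_gt hn

namespace ContraFunctorialSeminorm

variable {C : Type*} [Category C] {F : Cᵒᵖ ⥤ AddCommGrpCat} {N : ContraFunctorialSeminorm F}

theorem Homogeneous.nu_nsmul (hN : N.Homogeneous) (X : C) (n : ℕ)
    (x : F.obj (Opposite.op X)) : N.ν X (n • x) = n • N.ν X x := by
  rcases eq_or_ne n 0 with rfl | hn
  · simp only [zero_smul, N.map_zero]
  · rw [← natCast_zsmul, hN X n (by exact_mod_cast hn), nsmul_eq_mul, Int.cast_natCast,
      Nat.abs_cast]

theorem eq_zero_of_forall_nsmul_le (X : C) (x : F.obj (Opposite.op X)) {b : ℝ}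
    (h : ∀ n : ℕ, n • N.ν X x ≤ b) : N.ν X x = 0 :=
  (nonpos_of_forall_nsmul_le h).antisymm (N.nonneg X x)

end ContraFunctorialSeminorm

/-- If `C` has countably infinite coproducts `∐_ℕ X` and the contravariant functor
`F : Cᵒᵖ ⥤ Ab` takes them to products (via the structure morphisms), then every
finite homogeneous functorial semi-norm on `F` is trivial. -/
theorem seminorm_trivial_of_countably_additive {C : Type u} [Category.{v} C]
    [∀ X : C, HasCoproduct (fun _ : ℕ => X)]
    (F : Cᵒᵖ ⥤ AddCommGrpCat.{v})
    (hφ : ∀ X : C, Function.Bijective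
      (fun (γ : F.obj (Opposite.op (∐ fun _ : ℕ => X))) =>
        fun d : ℕ => F.map (Sigma.ι (fun _ : ℕ => X) d).op γ))
    (N : ContraFunctorialSeminorm F) (hN : N.Homogeneous) :
    ∀ (X : C) (α : F.obj (Opposite.op X)), N.ν X α = 0 := by
  intro X α
  obtain ⟨γ, hγ⟩ := (hφ X).surjective fun d : ℕ => d • α
  refine ContraFunctorialSeminorm.eq_zero_of_forall_nsmul_le X α (b := N.ν _ γ) fun d => ?_
  calc d • N.ν X α = N.ν X (F.map (Sigma.ι (fun _ : ℕ => X) d).op γ) := by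
        rw [← hN.nu_nsmul, ← congrFun hγ d]
    _ ≤ N.ν _ γ := N.functorial _ γ
end

section
/- Let B and C be normed real vector spaces with B complete, let ∂ : B → C be a continuous linear map, and let g_B : B → B and g_C : C → C be linear maps satisfying ‖g_B(x)‖ ≤ ‖x‖ for all x ∈ B, ‖g_C(y)‖ ≤ ‖y‖ for all y ∈ C, and ∂ ∘ g_B = g_C ∘ ∂. Let d ∈ ℝ with |d| > 1, let c ∈ C, and suppose there exists b ∈ B with ∂(b) = c − (1/d)·g_C(c). Then there exists b' ∈ B with ∂(b') = c; indeed b' := Σ_{k=0}^∞ d^{−k}·g_B^{∘k}(b) converges absolutely in B and satisfies ∂(b') = c. -/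
/-- The geometric-series argument: if `∂ : B → C` is a continuous linear map from a
complete normed space, `g_B, g_C` are norm-non-increasing linear maps with
`∂ ∘ g_B = g_C ∘ ∂`, `|d| > 1`, and `∂ b = c - (1/d) • g_C c`, then the series
`b' := ∑_{k} d^{-k} • g_B^{∘k}(b)` converges absolutely in `B` and `∂ b' = c`;
in particular there exists `b'` with `∂ b' = c`. -/
theorem geometric_series_boundary {B C : Type*}
    [NormedAddCommGroup B] [NormedSpace ℝ B] [CompleteSpace B]
    [NormedAddCommGroup C] [NormedSpace ℝ C]
    (bdry : B →L[ℝ] C) (gB : B →ₗ[ℝ] B) (gC : C →ₗ[ℝ] C)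
    (hgB : ∀ x : B, ‖gB x‖ ≤ ‖x‖) (hgC : ∀ y : C, ‖gC y‖ ≤ ‖y‖)
    (hcomm : ∀ x : B, bdry (gB x) = gC (bdry x))
    (d : ℝ) (hd : 1 < |d|) (c : C) (b : B)
    (hb : bdry b = c - (1 / d) • gC c) :
    (∃ b' : B, bdry b' = c) ∧
    Summable (fun k : ℕ => ‖(1 / d) ^ k • (⇑gB)^[k] b‖) ∧
    Summable (fun k : ℕ => (1 / d) ^ k • (⇑gB)^[k] b) ∧
    bdry (∑' k : ℕ, (1 / d) ^ k • (⇑gB)^[k] b) = c := by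
  have hr : |1 / d| < 1 := by
    rw [abs_div, abs_one, div_lt_one (by linarith)]
    exact hd
  have hr0 : (0:ℝ) ≤ |1 / d| := abs_nonneg _
  -- norm of iterates of gB
  have hiterB : ∀ k, ‖(⇑gB)^[k] b‖ ≤ ‖b‖ := by
    intro k
    induction k with
    | zero => simp
    | succ n ih => rw [Function.iterate_succ_apply']; exact (hgB _).trans ih
  have hsum1 : Summable (fun k : ℕ => ‖(1 / d) ^ k • (⇑gB)^[k] b‖) := by
    apply Summable.of_nonneg_of_le (fun k => norm_nonneg _) (fun k => ?_)
      ((summable_geometric_of_lt_one hr0 hr).mul_right ‖b‖)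
    rw [norm_smul, norm_pow, Real.norm_eq_abs]
    exact mul_le_mul_of_nonneg_left (hiterB k) (pow_nonneg hr0 k)
  have hsum2 : Summable (fun k : ℕ => (1 / d) ^ k • (⇑gB)^[k] b) := hsum1.of_norm
  -- commutation for iterates
  have hcommk : ∀ (k : ℕ) (x : B), bdry ((⇑gB)^[k] x) = (⇑gC)^[k] (bdry x) := by
    intro k
    induction k with
    | zero => simp
    | succ n ih =>
        intro x
        rw [Function.iterate_succ_apply', Function.iterate_succ_apply', hcomm, ih]
  -- the telescoping sequence
  set a : ℕ → C := fun k => (1 / d) ^ k • (⇑gC)^[k] c with ha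
  have hterm : ∀ k : ℕ, bdry ((1 / d) ^ k • (⇑gB)^[k] b) = a k - a (k + 1) := by
    intro k
    rw [map_smul, hcommk, hb]
    have hpow : ∀ y : C, (⇑gC)^[k] y = (gC ^ k) y := fun y =>
      (Module.End.pow_apply gC k y).symm
    rw [hpow, map_sub, map_smul, ha]
    simp only [hpow, Function.iterate_succ_apply, smul_sub, smul_smul]
    ring_nf
  -- summability of image
  have hsumC : Summable (fun k : ℕ => a k - a (k + 1)) := by
    have := hsum2.map bdry bdry.continuous
    simpa only [Function.comp_def, hterm] using this
  -- a tends to 0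
  have ha0 : Filter.Tendsto a Filter.atTop (nhds 0) := by
    apply squeeze_zero_norm (a := fun k => |1 / d| ^ k * ‖c‖)
    · intro k
      have hiterC : ‖(⇑gC)^[k] c‖ ≤ ‖c‖ := by
        induction k with
        | zero => simp
        | succ n ih => rw [Function.iterate_succ_apply']; exact (hgC _).trans ih
      rw [ha]
      simp only [norm_smul, norm_pow, Real.norm_eq_abs]
      exact mul_le_mul_of_nonneg_left hiterC (pow_nonneg hr0 k)
    · simpa using (tendsto_pow_atTop_nhds_zero_of_lt_one hr0 hr).mul_const ‖c‖
  -- telescoping sum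
  have htsum : ∑' k : ℕ, (a k - a (k + 1)) = a 0 := by
    refine HasSum.tsum_eq ?_
    rw [hsumC.hasSum_iff_tendsto_nat]
    have : (fun n => ∑ i ∈ Finset.range n, (a i - a (i + 1))) = fun n => a 0 - a n := by
      funext n
      exact Finset.sum_range_sub' a n
    rw [this]
    simpa using (tendsto_const_nhds.sub ha0)
  have hfinal : bdry (∑' k : ℕ, (1 / d) ^ k • (⇑gB)^[k] b) = c := by
    rw [bdry.map_tsum hsum2]
    simp only [hterm]
    rw [htsum]
    simp [ha]
  exact ⟨⟨_, hfinal⟩, hsum1, hsum2, hfinal⟩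
end
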